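/- For every continuously differentiable function f : [0,1] → ℝ, the value of f at the boundary point 0 satisfies |f(0)|² ≤ 2·(∫₀¹ f(x)² dx + ∫₀¹ f'(x)² dx). In particular, the evaluation map f ↦ f(0) is a linear map that is bounded with respect to the H¹ norm, with bound √2. -/

import Mathlib

/-!
Apply the one-dimensional `W^{1,1}` estimate `g(0) ≤ ∫₀¹ g + ∫₀¹ |g'|` (the fundamental
theorem of calculus from `0` to every `y`, averaged over `y ∈ [0,1]`) to `g = f²`, and bound
`|(f²)'| = |2 f f'| ≤ f² + f'²`.
-/

open Real Set MeasureTheory intervalIntegral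

theorem abs_sub_le_integral_abs_deriv {g g' : ℝ → ℝ} {a b y : ℝ}
    (hg : ∀ x ∈ Icc a b, HasDerivAt g (g' x) x) (hg' : IntervalIntegrable g' volume a b)
    (hy : y ∈ Icc a b) :
    |g y - g a| ≤ ∫ x in a..b, |g' x| := by
  have hsub : uIcc a y ⊆ Icc a b := by
    rw [uIcc_of_le hy.1]; exact Icc_subset_Icc_right hy.2
  rw [← integral_eq_sub_of_hasDerivAt (fun x hx => hg x (hsub hx))
    (hg'.mono_set (by rwa [uIcc_of_le (hy.1.trans hy.2)]))]
  calc |∫ x in a..y, g' x| ≤ ∫ x in a..y, |g' x| := abs_integral_le_integral_abs hy.1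
    _ ≤ ∫ x in a..b, |g' x| :=
      integral_mono_interval le_rfl hy.1 hy.2 (.of_forall fun _ => abs_nonneg _) hg'.abs

theorem sub_mul_le_integral_add_sub_mul_integral_abs_deriv {g g' : ℝ → ℝ} {a b : ℝ}
    (hab : a ≤ b) (hg : ∀ x ∈ Icc a b, HasDerivAt g (g' x) x)
    (hg' : IntervalIntegrable g' volume a b) :
    (b - a) * g a ≤ (∫ x in a..b, g x) + (b - a) * ∫ x in a..b, |g' x| := by
  have hg_int : IntervalIntegrable g volume a b :=
    ContinuousOn.intervalIntegrable fun x hx =>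
      (hg x (by rwa [uIcc_of_le hab] at hx)).continuousAt.continuousWithinAt
  have hpointwise : ∀ y ∈ Icc a b, g a ≤ g y + ∫ x in a..b, |g' x| := fun y hy => by
    linarith [neg_abs_le (g y - g a), abs_sub_le_integral_abs_deriv hg hg' hy]
  calc (b - a) * g a = ∫ _ in a..b, g a := by simp
    _ ≤ ∫ y in a..b, (g y + ∫ x in a..b, |g' x|) :=
      integral_mono_on hab intervalIntegrable_const (hg_int.add intervalIntegrable_const) hpointwise
    _ = (∫ x in a..b, g x) + (b - a) * ∫ x in a..b, |g' x| := by
      simp [integral_add hg_int intervalIntegrable_const]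

theorem abs_two_mul_le_add_sq (a b : ℝ) : |2 * a * b| ≤ a ^ 2 + b ^ 2 :=
  abs_le.2 ⟨by nlinarith [sq_nonneg (a + b)], two_mul_le_add_sq a b⟩

theorem sq_le_two_mul_integral_sq_add_integral_deriv_sq {f : ℝ → ℝ} (hf : ContDiff ℝ 1 f) :
    f 0 ^ 2 ≤ 2 * ((∫ x in (0 : ℝ)..1, f x ^ 2) + ∫ x in (0 : ℝ)..1, deriv f x ^ 2) := by
  have hf_sq : Continuous fun x => f x ^ 2 := hf.continuous.pow 2
  have hf'_sq : Continuous fun x => deriv f x ^ 2 := (hf.continuous_deriv le_rfl).pow 2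
  have hsq_deriv : ∀ x, HasDerivAt (fun x => f x ^ 2) (2 * f x * deriv f x) x := fun x => by
    simpa using (hf.differentiable one_ne_zero x).hasDerivAt.fun_pow 2
  have hsobolev := sub_mul_le_integral_add_sub_mul_integral_abs_deriv zero_le_one
    (fun x _ => hsq_deriv x)
    ((by fun_prop : Continuous fun x => 2 * f x * deriv f x).intervalIntegrable _ _)
  have hcross : (∫ x in (0 : ℝ)..1, |2 * f x * deriv f x|)
      ≤ (∫ x in (0 : ℝ)..1, f x ^ 2) + ∫ x in (0 : ℝ)..1, deriv f x ^ 2 := by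
    rw [← integral_add (hf_sq.intervalIntegrable _ _) (hf'_sq.intervalIntegrable _ _)]
    exact integral_mono_on zero_le_one ((by fun_prop : Continuous _).intervalIntegrable _ _)
      ((hf_sq.add hf'_sq).intervalIntegrable _ _) fun x _ => abs_two_mul_le_add_sq _ _
  have hB : 0 ≤ ∫ x in (0 : ℝ)..1, deriv f x ^ 2 :=
    integral_nonneg zero_le_one fun x _ => sq_nonneg _
  simp only [sub_zero, one_mul] at hsobolev
  linarith

/-- Trace-type (Morrey) inequality: for a `C¹` function `f` on `[0,1]`,
`|f(0)|² ≤ 2(∫₀¹ f² + ∫₀¹ (f')²)`; in particular, evaluation at `0` is bounded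
with respect to the `H¹` norm with bound `√2`. -/
theorem trace_inequality_eval_at_zero
    (f : ℝ → ℝ) (hf : ContDiff ℝ 1 f) :
    |f 0| ^ 2 ≤ 2 * ((∫ x in (0 : ℝ)..1, f x ^ 2) + ∫ x in (0 : ℝ)..1, deriv f x ^ 2) ∧
    |f 0| ≤ Real.sqrt 2 *
      Real.sqrt ((∫ x in (0 : ℝ)..1, f x ^ 2) + ∫ x in (0 : ℝ)..1, deriv f x ^ 2) := by
  have hmain := sq_le_two_mul_integral_sq_add_integral_deriv_sq hf
  refine ⟨by rwa [sq_abs], ?_⟩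
  rw [← Real.sqrt_mul zero_le_two]
  exact Real.abs_le_sqrt hmain
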